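/- arXiv:0801.0446 — 6 statements merged into one kernel-verified Lean document; each statement's English description precedes it below -/
import Mathlib

section
/- Let R be a discrete valuation ring with fraction field K and residue field κ, and let G be a finite group whose order is invertible in R. Let M be a finitely generated free R-module equipped with an action of G by R-module automorphisms, and extend the action to K ⊗_R M and to κ ⊗_R M through the M-factor. Then dim_K (K ⊗_R M)^G = dim_κ (κ ⊗_R M)^G, where (·)^G denotes the subspace of vectors fixed by every element of G. -/
/-!
Since `|G|` is invertible in `R`, the average over `G` is a projection of `M` onto `M^G`, and
averaging commutes with base change. Hence for every `R`-algebra `A`, `(A ⊗ M)^G` is the image of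
`A ⊗ M^G → A ⊗ M`, which is injective because `M^G` is a direct summand. A direct summand of a
finite free module over a local ring is free, so both fibres have invariants of dimension
`rank_R M^G`.
-/

open LinearMap TensorProduct Module

namespace LinearMap.IsProj

variable {R M : Type*} [CommRing R] [AddCommGroup M] [Module R M]
  {p : Submodule R M} {f : M →ₗ[R] M}

lemma codRestrict_comp_subtype (h : IsProj p f) : h.codRestrict ∘ₗ p.subtype = .id := by
  ext x
  exact congrArg Subtype.val (h.codRestrict_apply_cod x)

lemma projective [Projective R M] (h : IsProj p f) : Projective R p :=
  .of_split p.subtype h.codRestrict h.codRestrict_comp_subtype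

lemma finite [Module.Finite R M] (h : IsProj p f) : Module.Finite R p :=
  .of_surjective h.codRestrict fun x => ⟨x, h.codRestrict_apply_cod x⟩

variable (A : Type*) [CommRing A] [Algebra R A]

lemma baseChange_codRestrict_comp_subtype (h : IsProj p f) :
    h.codRestrict.baseChange A ∘ₗ p.subtype.baseChange A = .id := by
  rw [← baseChange_comp, h.codRestrict_comp_subtype, baseChange_id]

lemma range_baseChange (h : IsProj p f) :
    range (f.baseChange A) = range (p.subtype.baseChange A) := by
  have hsurj : range (h.codRestrict.baseChange A) = ⊤ :=
    range_eq_top.2 fun y => ⟨_, congr($(h.baseChange_codRestrict_comp_subtype A) y)⟩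
  rw [← h.subtype_comp_codRestrict, baseChange_comp, range_comp_of_range_eq_top _ hsurj]

noncomputable def baseChangeEquivRange (h : IsProj p f) :
    (A ⊗[R] p) ≃ₗ[A] range (f.baseChange A) :=
  (LinearEquiv.ofLeftInverse (g := h.codRestrict.baseChange A)
      fun x => congr($(h.baseChange_codRestrict_comp_subtype A) x)).trans
    (.ofEq _ _ (h.range_baseChange A).symm)

lemma finrank_range_baseChange [IsLocalRing R] [Projective R M] [Module.Finite R M]
    [StrongRankCondition A] (h : IsProj p f) :
    finrank A (range (f.baseChange A)) = finrank R p := by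
  have := h.projective
  have := h.finite
  have := free_of_flat_of_isLocalRing (R := R) (P := p)
  rw [← (h.baseChangeEquivRange A).finrank_eq, finrank_baseChange]

end LinearMap.IsProj

namespace Representation

section Monoid

variable {R G M : Type*} [CommRing R] [Monoid G] [AddCommGroup M] [Module R M]
  (σ : Representation R G M) (A : Type*) [CommRing A] [Algebra R A]

noncomputable def baseChange : Representation A G (A ⊗[R] M) :=
  (Module.End.baseChangeHom R A M).toMonoidHom.comp σ

@[simp]
lemma baseChange_apply (g : G) : σ.baseChange A g = (σ g).baseChange A := rfl

end Monoid

variable {R G M : Type*} [CommRing R] [Group G] [AddCommGroup M] [Module R M]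
  (σ : Representation R G M)

lemma iInf_eqLocus_eq_invariants : ⨅ g, eqLocus (σ g) .id = σ.invariants := by
  ext x
  simp [mem_invariants]

variable [Fintype G] [Invertible (Fintype.card G : R)] (A : Type*) [CommRing A] [Algebra R A]

lemma averageMap_baseChange [Invertible (Fintype.card G : A)] :
    (σ.baseChange A).averageMap = σ.averageMap.baseChange A := by
  have hinv : ⅟(Fintype.card G : A) = algebraMap R A ⅟(Fintype.card G : R) :=
    invOf_eq_right_inv <| by
      rw [← map_natCast (algebraMap R A), ← map_mul, mul_invOf_self, map_one]
  have hsum : (∑ g, σ g).baseChange A = ∑ g, (σ g).baseChange A :=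
    map_sum (baseChangeHom R A M M) _ _
  simp only [averageMap, GroupAlgebra.average, map_smul, map_sum, MonoidAlgebra.of_apply,
    asAlgebraHom_single_one, baseChange_apply, baseChange_smul, hsum]
  rw [hinv, algebraMap_smul]

lemma finrank_invariants_baseChange [IsLocalRing R] [Projective R M] [Module.Finite R M]
    [StrongRankCondition A] :
    finrank A (σ.baseChange A).invariants = finrank R σ.invariants := by
  let := IsScalarTower.invertibleAlgebraCoeNat R A (Fintype.card G)
  rw [← (σ.baseChange A).isProj_averageMap.range, averageMap_baseChange,
    σ.isProj_averageMap.finrank_range_baseChange A]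

end Representation

theorem statement3_general {R : Type*} [CommRing R] [IsDomain R] [IsDiscreteValuationRing R]
    {K : Type*} [Field K] [Algebra R K]
    {M : Type*} [AddCommGroup M] [Module R M] [Module.Free R M] [Module.Finite R M]
    {G : Type*} [Group G] [Fintype G] (hG : IsUnit ((Fintype.card G : R)))
    (ρ : G →* (M ≃ₗ[R] M)) :
    Module.finrank K
        ↥(⨅ g : G, LinearMap.eqLocus
          (LinearMap.baseChange K (ρ g).toLinearMap) LinearMap.id)
      = Module.finrank (IsLocalRing.ResidueField R)
        ↥(⨅ g : G, LinearMap.eqLocus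
          (LinearMap.baseChange (IsLocalRing.ResidueField R) (ρ g).toLinearMap)
          LinearMap.id) := by
  let := hG.invertible
  let σ : Representation R G M := LinearEquiv.automorphismGroup.toLinearMapMonoidHom.comp ρ
  let κ := IsLocalRing.ResidueField R
  calc _ = finrank K (σ.baseChange K).invariants := by
        rw [← Representation.iInf_eqLocus_eq_invariants]; rfl
    _ = finrank R σ.invariants := σ.finrank_invariants_baseChange K
    _ = finrank κ (σ.baseChange κ).invariants := (σ.finrank_invariants_baseChange κ).symm
    _ = _ := by rw [← Representation.iInf_eqLocus_eq_invariants]; rfl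

/-- Over a discrete valuation ring, the dimension of the invariants of a finite group of order
invertible in `R` acting on a finite free module is the same in the generic and the special
fibre. -/
theorem statement3 {R : Type*} [CommRing R] [IsDomain R] [IsDiscreteValuationRing R]
    {K : Type*} [Field K] [Algebra R K] [IsFractionRing R K]
    {M : Type*} [AddCommGroup M] [Module R M] [Module.Free R M] [Module.Finite R M]
    {G : Type*} [Group G] [Fintype G] (hG : IsUnit ((Fintype.card G : R)))
    (ρ : G →* (M ≃ₗ[R] M)) :
    Module.finrank K
        ↥(⨅ g : G, LinearMap.eqLocus
          (LinearMap.baseChange K (ρ g).toLinearMap) LinearMap.id)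
      = Module.finrank (IsLocalRing.ResidueField R)
        ↥(⨅ g : G, LinearMap.eqLocus
          (LinearMap.baseChange (IsLocalRing.ResidueField R) (ρ g).toLinearMap)
          LinearMap.id) :=
  statement3_general hG ρ
end

section
/- Let P be an abelian group, let σ be an automorphism of P, and let T be a subgroup of P with σ(T) = T. Assume that T is a torsion group and that the quotient Q = P/T is a finitely generated free abelian group; let π : P → Q denote the projection and σ̄ the automorphism of Q induced by σ. Then there exist an integer N ≥ 1 and an injective group homomorphism s : Q → P such that π(s(x)) = N·x for all x ∈ Q and s ∘ σ̄ = σ ∘ s. In particular, the image Λ = s(Q) is a σ-stable finitely generated free subgroup of P with Λ ∩ T = 0. -/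
/-- A `σ`-equivariant quasi-splitting of a torsion subgroup with finitely generated free
quotient. -/
theorem statement6 {P : Type*} [AddCommGroup P] (σ : P ≃+ P) (T : AddSubgroup P)
    (hT : AddSubgroup.map σ.toAddMonoidHom T = T)
    (htors : ∀ x ∈ T, IsOfFinAddOrder x)
    [Module.Free ℤ (P ⧸ T)] [Module.Finite ℤ (P ⧸ T)] :
    ∃ (N : ℕ) (s : (P ⧸ T) →+ P), 1 ≤ N ∧ Function.Injective s ∧
      (∀ q : P ⧸ T, QuotientAddGroup.mk' T (s q) = N • q) ∧
      (∀ x : P, s (QuotientAddGroup.mk' T (σ x)) = σ (s (QuotientAddGroup.mk' T x))) ∧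
      AddSubgroup.map σ.toAddMonoidHom s.range = s.range ∧
      s.range ⊓ T = ⊥ := by
  classical
  set π : P →+ P ⧸ T := QuotientAddGroup.mk' T with hπ
  -- σ and σ.symm preserve T
  have hσT : ∀ x ∈ T, σ x ∈ T := fun x hx => hT ▸ ⟨x, hx, rfl⟩
  have hσT' : ∀ x ∈ T, σ.symm x ∈ T := by
    intro x hx
    rw [← hT] at hx
    obtain ⟨y, hy, rfl⟩ := hx
    simpa using hy
  -- induced automorphisms on the quotient
  set σb : P ⧸ T →+ P ⧸ T :=
    QuotientAddGroup.map T T σ.toAddMonoidHom (fun x hx => hσT x hx) with hσb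
  set σb' : P ⧸ T →+ P ⧸ T :=
    QuotientAddGroup.map T T σ.symm.toAddMonoidHom (fun x hx => hσT' x hx) with hσb'
  have hσbmk : ∀ x : P, σb (π x) = π (σ x) := fun x => rfl
  have hσb'mk : ∀ x : P, σb' (π x) = π (σ.symm x) := fun x => rfl
  have hσbσb' : ∀ q : P ⧸ T, σb (σb' q) = q := by
    intro q
    obtain ⟨x, rfl⟩ := QuotientAddGroup.mk'_surjective T q
    show σb (σb' (π x)) = π x
    rw [hσb'mk, hσbmk]
    simp
  -- a linear section of π
  obtain ⟨tl, htl⟩ := Module.projective_lifting_property (π.toIntLinearMap)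
    (LinearMap.id : (P ⧸ T) →ₗ[ℤ] P ⧸ T) (QuotientAddGroup.mk'_surjective T)
  set t : (P ⧸ T) →+ P := tl.toAddMonoidHom with hts
  have hsec : ∀ q : P ⧸ T, π (t q) = q := fun q => congrArg (fun f => f q) <|
    congrArg LinearMap.toAddMonoidHom htl
  -- the defect homomorphism
  set δ : (P ⧸ T) →+ P := (σ.toAddMonoidHom.comp t) - (t.comp σb) with hδ
  have hδT : ∀ q : P ⧸ T, δ q ∈ T := by
    intro q
    have : π (δ q) = 0 := by
      have h1 : π (σ (t q)) = σb q := by rw [← hσbmk, hsec]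
      have h2 : π (t (σb q)) = σb q := hsec _
      simp [hδ, h1, h2]
    rwa [hπ, QuotientAddGroup.mk'_apply, QuotientAddGroup.eq_zero_iff] at this
  -- the range of δ is a finite group
  haveI : AddGroup.FG (P ⧸ T) := Module.Finite.iff_addGroup_fg.mp inferInstance
  haveI : AddGroup.FG δ.range := inferInstance
  haveI hfin : Finite δ.range := by
    apply AddCommGroup.finite_of_fg_torsion
    intro g
    obtain ⟨x, q, rfl⟩ := g
    have hx : IsOfFinAddOrder (δ q) := htors _ (hδT q)
    obtain ⟨n, hn, hn0⟩ := isOfFinAddOrder_iff_nsmul_eq_zero.mp hx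
    refine isOfFinAddOrder_iff_nsmul_eq_zero.mpr ⟨n, hn, ?_⟩
    ext
    simpa using hn0
  set N : ℕ := AddMonoid.exponent δ.range with hN
  have hNpos : 0 < N := (AddMonoid.ExponentExists.of_finite).exponent_pos
  have hNδ : ∀ q : P ⧸ T, N • δ q = 0 := by
    intro q
    have := AddMonoid.exponent_nsmul_eq_zero (⟨δ q, q, rfl⟩ : δ.range)
    simpa [hN] using congrArg (Subtype.val) this
  -- the quasi-splitting
  set s : (P ⧸ T) →+ P := N • t with hsdef
  have hs : ∀ q, s q = N • t q := fun q => rfl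
  have hπs : ∀ q : P ⧸ T, π (s q) = N • q := by
    intro q
    rw [hs, map_nsmul, hsec]
  have hequiv : ∀ q : P ⧸ T, s (σb q) = σ (s q) := by
    intro q
    have hδq : σ (t q) - t (σb q) = δ q := rfl
    have : N • (σ (t q)) - N • (t (σb q)) = 0 := by
      rw [← smul_sub, hδq, hNδ]
    have h2 : N • (t (σb q)) = N • (σ (t q)) := by
      rw [sub_eq_zero] at this; exact this.symm
    rw [hs, h2, hs, ← map_nsmul]
  have hinj : Function.Injective s := by
    intro a b hab
    have : N • a = N • b := by rw [← hπs, ← hπs, hab]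
    have hNz : (N : ℤ) ≠ 0 := Int.natCast_ne_zero.mpr hNpos.ne'
    have : (N : ℤ) • a = (N : ℤ) • b := by simpa using this
    exact smul_right_injective (P ⧸ T) hNz this
  refine ⟨N, s, hNpos, hinj, hπs, ?_, ?_, ?_⟩
  · intro x
    have := hequiv (π x)
    rw [hσbmk] at this
    exact this
  · ext y
    constructor
    · rintro ⟨x, ⟨q, rfl⟩, rfl⟩
      exact ⟨σb q, hequiv q⟩
    · rintro ⟨q, rfl⟩
      refine ⟨s (σb' q), ⟨σb' q, rfl⟩, ?_⟩
      show σ (s (σb' q)) = s q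
      rw [← hequiv, hσbσb']
  · ext x
    simp only [AddSubgroup.mem_inf, AddSubgroup.mem_bot]
    constructor
    · rintro ⟨⟨q, rfl⟩, hxT⟩
      have : π (s q) = 0 := by
        rw [hπ, QuotientAddGroup.mk'_apply, QuotientAddGroup.eq_zero_iff]; exact hxT
      rw [hπs] at this
      have hq : q = 0 := by
        have hNz : (N : ℤ) ≠ 0 := Int.natCast_ne_zero.mpr hNpos.ne'
        have : (N : ℤ) • q = (N : ℤ) • (0 : P ⧸ T) := by simpa using this
        exact smul_right_injective (P ⧸ T) hNz this
      rw [hq, map_zero]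
    · rintro rfl
      exact ⟨⟨0, map_zero s⟩, zero_mem T⟩
end

section
/- Fix a real number q > 1 and an integer M. Let ι and κ be finite index sets, let α : ι → ℂ and β : κ → ℂ be functions, and let w : ι → ℤ and v : κ → ℤ be weight functions such that |α(i)| = q^{w(i)/2} for all i ∈ ι and |β(j)| = q^{v(j)/2} for all j ∈ κ. Assume that Σ_{i∈ι} (−1)^{w(i)}·α(i)^m = Σ_{j∈κ} (−1)^{v(j)}·β(j)^m for every integer m ≥ M. Then for every n ∈ ℤ the multiset of values {α(i) : i ∈ ι, w(i) = n} equals the multiset of values {β(j) : j ∈ κ, v(j) = n}; in particular Σ_{i : w(i)=n} α(i)^m = Σ_{j : v(j)=n} β(j)^m for every n ∈ ℤ and every integer m ≥ 1. -/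
/-!
Since `‖z‖ = q ^ (n / 2)` determines `n`, the weight, and with it the sign `(-1) ^ w i`, is a
function of the value `α i`. Grouping both alternating sums by value, the hypothesis becomes a
linear relation among the sequences `m ↦ z ^ m` for finitely many distinct nonzero `z`; these are
linearly independent (Dedekind's independence of characters), so every value occurs equally often
among the `α i` and the `β j`. Selecting the values of a given weight is then a filter on one and
the same multiset.
-/

open Finset

theorem linearIndependent_pow_fun (K : Type*) [CommRing K] [IsDomain K] :
    LinearIndependent K (fun z : K => fun k : ℕ => z ^ k) :=
  (linearIndependent_monoidHom (Multiplicative ℕ) K).comp (powersHom K)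
    (powersHom K).injective

theorem sum_filter_comp_eq_card_nsmul {ι K M : Type*} [DecidableEq K] [AddCommMonoid M]
    (s : Finset ι) (α : ι → K) (f : K → M) (z : K) :
    ∑ i ∈ s with α i = z, f (α i) = #{i ∈ s | α i = z} • f z := by
  rw [sum_congr rfl fun i hi => by rw [(mem_filter.1 hi).2], sum_const]

section Fibers

variable {K ι κ : Type*} [Field K] [Fintype ι] [Fintype κ]

theorem linearCombination_pow_fun_sum_single (α a : ι → K) :
    Finsupp.linearCombination K (fun z : K => fun k : ℕ => z ^ k)
        (∑ i, Finsupp.single (α i) (a i)) = fun k => ∑ i, a i * α i ^ k := by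
  ext k
  simp [map_sum, Finset.sum_apply]

variable [DecidableEq K] {α : ι → K} {β : κ → K}

theorem sum_filter_eq_of_forall_sum_mul_pow_eq {a : ι → K} {b : κ → K}
    (h : ∀ k : ℕ, ∑ i, a i * α i ^ k = ∑ j, b j * β j ^ k) (z : K) :
    ∑ i with α i = z, a i = ∑ j with β j = z, b j := by
  have hsingle : ∑ i, Finsupp.single (α i) (a i) = ∑ j, Finsupp.single (β j) (b j) :=
    linearIndependent_pow_fun K <| by
      rw [linearCombination_pow_fun_sum_single, linearCombination_pow_fun_sum_single]
      exact funext h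
  simpa [Finsupp.finsetSum_apply, Finsupp.single_apply, sum_filter] using
    DFunLike.congr_fun hsingle z

theorem sum_filter_eq_of_forall_sum_mul_zpow_eq (hα : ∀ i, α i ≠ 0) (hβ : ∀ j, β j ≠ 0)
    {a : ι → K} {b : κ → K} (M : ℤ)
    (h : ∀ m, M ≤ m → ∑ i, a i * α i ^ m = ∑ j, b j * β j ^ m) (z : K) :
    ∑ i with α i = z, a i = ∑ j with β j = z, b j := by
  by_cases hz : z = 0
  · simp [hz, hα, hβ]
  have shifted : ∀ k : ℕ,
      ∑ i, a i * α i ^ M * α i ^ k = ∑ j, b j * β j ^ M * β j ^ k := fun k => by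
    simpa [mul_assoc, zpow_add₀ (hα _), zpow_add₀ (hβ _)] using h (M + k) (by omega)
  have hfiber := sum_filter_eq_of_forall_sum_mul_pow_eq shifted z
  rw [sum_congr rfl (g := fun i => a i * z ^ M) fun i hi => by rw [(mem_filter.1 hi).2],
    sum_congr rfl (g := fun j => b j * z ^ M) fun j hj => by rw [(mem_filter.1 hj).2],
    ← sum_mul, ← sum_mul] at hfiber
  exact mul_right_cancel₀ (zpow_ne_zero _ hz) hfiber

theorem map_univ_eq_of_forall_sum_mul_zpow_eq [CharZero K] (hα : ∀ i, α i ≠ 0)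
    (hβ : ∀ j, β j ≠ 0) {c : K → K} (hc : ∀ z, c z ≠ 0) (M : ℤ)
    (h : ∀ m, M ≤ m → ∑ i, c (α i) * α i ^ m = ∑ j, c (β j) * β j ^ m) :
    univ.val.map α = univ.val.map β := by
  ext z
  have hfiber := sum_filter_eq_of_forall_sum_mul_zpow_eq hα hβ M h z
  rw [sum_filter_comp_eq_card_nsmul, sum_filter_comp_eq_card_nsmul, nsmul_eq_mul,
    nsmul_eq_mul] at hfiber
  rw [Multiset.count_map, Multiset.count_map]
  simp_rw [eq_comm (a := z), ← filter_val]
  exact_mod_cast mul_right_cancel₀ (hc z) hfiber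

end Fibers

noncomputable def weight (q : ℝ) (z : ℂ) : ℤ := round (2 * Real.logb q ‖z‖)

theorem weight_eq_of_norm_eq_rpow {q : ℝ} (hq : 1 < q) {z : ℂ} {n : ℤ}
    (h : ‖z‖ = q ^ ((n : ℝ) / 2)) : weight q z = n := by
  rw [weight, h, Real.logb_rpow (by linarith) hq.ne', mul_div_cancel₀ _ two_ne_zero,
    round_intCast]

theorem ne_zero_of_norm_eq_rpow {q : ℝ} (hq : 0 < q) {z : ℂ} {x : ℝ} (h : ‖z‖ = q ^ x) :
    z ≠ 0 :=
  norm_ne_zero_iff.1 (h ▸ (Real.rpow_pos_of_pos hq x).ne')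

theorem filter_val_map_eq_filter_map {ι β γ : Type*} [DecidableEq γ] (s : Finset ι)
    (f : ι → β) (g : β → γ) {w : ι → γ} (hw : ∀ i, g (f i) = w i) (n : γ) :
    (s.filter fun i => w i = n).val.map f = (s.val.map f).filter fun z => g z = n := by
  simp [filter_val, Multiset.filter_map, hw]

/-- Equality of alternating sums of `m`-th powers of pure numbers, for all large `m`, forces
equality of the multisets of numbers weight by weight. -/
theorem statement8 (q : ℝ) (hq : 1 < q) (M : ℤ)
    {ι κ : Type*} [Fintype ι] [Fintype κ]
    (α : ι → ℂ) (β : κ → ℂ) (w : ι → ℤ) (v : κ → ℤ)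
    (hα : ∀ i, ‖α i‖ = q ^ ((w i : ℝ) / 2))
    (hβ : ∀ j, ‖β j‖ = q ^ ((v j : ℝ) / 2))
    (h : ∀ m : ℤ, M ≤ m →
      ∑ i, (-1 : ℂ) ^ (w i) * α i ^ m = ∑ j, (-1 : ℂ) ^ (v j) * β j ^ m) :
    (∀ n : ℤ,
        (Finset.univ.filter fun i => w i = n).val.map α
          = (Finset.univ.filter fun j => v j = n).val.map β) ∧
      ∀ n : ℤ, ∀ m : ℤ, 1 ≤ m →
        ∑ i ∈ Finset.univ.filter (fun i => w i = n), α i ^ m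
          = ∑ j ∈ Finset.univ.filter (fun j => v j = n), β j ^ m := by
  classical
  have hwα : ∀ i, weight q (α i) = w i := fun i => weight_eq_of_norm_eq_rpow hq (hα i)
  have hvβ : ∀ j, weight q (β j) = v j := fun j => weight_eq_of_norm_eq_rpow hq (hβ j)
  have hmap : univ.val.map α = univ.val.map β :=
    map_univ_eq_of_forall_sum_mul_zpow_eq
      (fun i => ne_zero_of_norm_eq_rpow (by linarith) (hα i))
      (fun j => ne_zero_of_norm_eq_rpow (by linarith) (hβ j))
      (c := fun z => (-1) ^ weight q z) (fun _ => zpow_ne_zero _ (by norm_num)) M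
      (by simpa only [hwα, hvβ] using h)
  have hweight (n : ℤ) :
      (univ.filter fun i => w i = n).val.map α = (univ.filter fun j => v j = n).val.map β := by
    rw [filter_val_map_eq_filter_map _ _ _ hwα, filter_val_map_eq_filter_map _ _ _ hvβ, hmap]
  refine ⟨hweight, fun n m _ => ?_⟩
  simpa [sum_eq_multiset_sum, Multiset.map_map] using
    congrArg (fun s => (s.map (· ^ m)).sum) (hweight n)
end

section
/- Let n be a natural number, let r be a positive real number with r ≠ 1, and let T be a ℂ-linear automorphism of ℂⁿ all of whose eigenvalues λ satisfy |λ| = r. Let S be a set of polynomials in n variables over ℂ and let Z = {x ∈ ℂⁿ : p(x) = 0 for all p ∈ S} be their common zero locus. If T maps Z into Z, then Z is stable under scalar multiplication: for every x ∈ Z and every c ∈ ℂ, the point c·x lies in Z. -/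
/-!
Substituting `T` into polynomials, `p ↦ p ∘ T`, preserves every space of homogeneous
polynomials of degree `d`. An eigenvector `h` there, `h ∘ T = μ • h`, satisfies
`|μ|^k |h y| = |h (T^k y)| ≤ C ‖T^k‖^d ‖y‖^d`, so Gelfand's formula gives `|μ| ≤ r^d`, and the
same argument for `T⁻¹` gives `|μ| = r^d`. As `r ≠ 1`, the minimal polynomials of the
substitution on different degrees have no common root, hence are pairwise coprime, and a Bézout
identity writes each homogeneous component of `p` as a polynomial in the substitution applied
to `p`. The vanishing ideal of `Z` is stable under substitution since `T Z ⊆ Z`, so it contains the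
homogeneous components of its elements, and a homogeneous polynomial vanishing at `x` vanishes
on the line through `x`.
-/

open Filter Topology MvPolynomial

theorem Submodule.mem_of_sum_mem_of_pairwise_isCoprime {R M ι : Type*} [CommRing R]
    [AddCommGroup M] [Module R M] [DecidableEq ι] {f : Module.End R M} {P : Submodule R M}
    (hP : P ≤ P.comap f) {t : Finset ι} {χ : ι → Polynomial R}
    (hχ : (t : Set ι).Pairwise fun j k => IsCoprime (χ j) (χ k)) {v : ι → M}
    (hv : ∀ i ∈ t, Polynomial.aeval f (χ i) (v i) = 0) (hsum : ∑ i ∈ t, v i ∈ P) {i : ι}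
    (hi : i ∈ t) : v i ∈ P := by
  obtain ⟨b, hb⟩ := (exists_sum_eq_one_iff_pairwise_coprime ⟨i, hi⟩).2 <|
    fun j k hjk => hχ j.2 k.2 (Subtype.coe_injective.ne hjk)
  set e : ι → Polynomial R := fun j => b j * ∏ k ∈ t \ {j}, χ k
  have he : ∀ j ∈ t, ∀ k ∈ t, j ≠ k → Polynomial.aeval f (e j) (v k) = 0 := by
    intro j _ k hk hjk
    obtain ⟨w, hw⟩ : χ k ∣ e j := (Finset.dvd_prod_of_mem χ
      (Finset.mem_sdiff.2 ⟨hk, Finset.notMem_singleton.2 hjk.symm⟩)).mul_left _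
    rw [hw, mul_comm, map_mul, Module.End.mul_apply, hv k hk, map_zero]
  have hproj : Polynomial.aeval f (e i) (∑ k ∈ t, v k) = v i :=
    calc Polynomial.aeval f (e i) (∑ k ∈ t, v k) = Polynomial.aeval f (e i) (v i) := by
          rw [map_sum, Finset.sum_eq_single_of_mem i hi fun k hk hki => he i hi k hk hki.symm]
      _ = ∑ j ∈ t, Polynomial.aeval f (e j) (v i) :=
          (Finset.sum_eq_single_of_mem i hi fun j hj hji => he j hj i hi hji).symm
      _ = v i := by
          rw [← LinearMap.sum_apply, ← map_sum, hb, map_one, Module.End.one_apply]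
  exact hproj ▸ Polynomial.aeval_apply_smul_mem_of_le_comap hsum _ f hP

theorem Polynomial.aeval_restrict_apply {R M : Type*} [CommSemiring R] [AddCommMonoid M]
    [Module R M] (f : Module.End R M) {p : Submodule R M} (hf : ∀ v ∈ p, f v ∈ p)
    (u : Polynomial R) (v : p) :
    (Polynomial.aeval (f.restrict hf) u v : M) = Polynomial.aeval f u v := by
  induction u using Polynomial.induction_on' with
  | add a b ha hb => simp only [map_add, LinearMap.add_apply, Submodule.coe_add, ha, hb]
  | monomial k a =>
    simp only [Polynomial.aeval_monomial, Module.End.mul_apply, Module.algebraMap_end_apply,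
      Submodule.coe_smul]
    rw [Module.End.pow_restrict]
    rfl

theorem LinearEquiv.hasEigenvalue_inv_of_hasEigenvalue_symm {K V : Type*} [Field K]
    [AddCommGroup V] [Module K V] (T : V ≃ₗ[K] V) {ν : K}
    (h : Module.End.HasEigenvalue T.symm.toLinearMap ν) :
    Module.End.HasEigenvalue T.toLinearMap ν⁻¹ := by
  obtain ⟨v, hv⟩ := h.exists_hasEigenvector
  have hTv : T.symm v = ν • v := hv.apply_eq_smul
  have hν : ν ≠ 0 := by
    rintro rfl
    exact hv.2 (T.symm.map_eq_zero_iff.1 (by simpa using hTv))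
  refine Module.End.hasEigenvalue_of_hasEigenvector ⟨Module.End.mem_eigenspace_iff.2 ?_, hv.2⟩
  have := congrArg (fun w => ν⁻¹ • T w) hTv
  simp only [LinearEquiv.apply_symm_apply, map_smul, smul_smul, inv_mul_cancel₀ hν,
    one_smul] at this
  exact this.symm

theorem ContinuousLinearMap.norm_pow_mul_le_of_apply_eq_mul {E : Type*} [NormedAddCommGroup E]
    [NormedSpace ℂ E] {A : E →L[ℂ] E} {f : E → ℂ} {C : ℝ} {d : ℕ}
    (hf : ∀ z, ‖f z‖ ≤ C * ‖z‖ ^ d) (hC : 0 ≤ C) {μ : ℂ} (hμ : ∀ z, f (A z) = μ * f z) (y : E)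
    (k : ℕ) : ‖μ‖ ^ k * ‖f y‖ ≤ C * ‖y‖ ^ d * ‖A ^ k‖ ^ d := by
  have hiter : f ((A ^ k) y) = μ ^ k * f y := by
    induction k with
    | zero => simp
    | succ k ih =>
      rw [pow_succ', mul_apply_eq_comp, hμ, ih, pow_succ']
      ring
  calc ‖μ‖ ^ k * ‖f y‖ = ‖f ((A ^ k) y)‖ := by rw [hiter, norm_mul, norm_pow]
    _ ≤ C * ‖(A ^ k) y‖ ^ d := hf _
    _ ≤ C * (‖A ^ k‖ * ‖y‖) ^ d := by gcongr; exact (A ^ k).le_opNorm y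
    _ = C * ‖y‖ ^ d * ‖A ^ k‖ ^ d := by ring

theorem ContinuousLinearMap.norm_le_pow_of_apply_eq_mul {E : Type*} [NormedAddCommGroup E]
    [NormedSpace ℂ E] [CompleteSpace E] {A : E →L[ℂ] E} {ρ : ℝ} (hρ : 0 ≤ ρ)
    (hA : spectralRadius ℂ A ≤ ENNReal.ofReal ρ) {f : E → ℂ} {C : ℝ} {d : ℕ}
    (hf : ∀ z, ‖f z‖ ≤ C * ‖z‖ ^ d) {μ : ℂ} (hμ : ∀ z, f (A z) = μ * f z) {y : E}
    (hy : f y ≠ 0) : ‖μ‖ ≤ ρ ^ d := by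
  have hfy : 0 < ‖f y‖ := norm_pos_iff.2 hy
  have hCy : 0 < C * ‖y‖ ^ d := hfy.trans_le (hf y)
  have hC : 0 ≤ C := (pos_of_mul_pos_left hCy (by positivity)).le
  set K := C * ‖y‖ ^ d / ‖f y‖ with hKdef
  have hK : 0 < K := div_pos hCy hfy
  have hpow : ∀ k : ℕ, ‖μ‖ ^ k ≤ K * ‖A ^ k‖ ^ d := fun k => by
    rw [hKdef, div_mul_eq_mul_div, le_div_iff₀ hfy]
    exact norm_pow_mul_le_of_apply_eq_mul hf hC hμ y k
  have hroot : ∀ k : ℕ, k ≠ 0 → ‖μ‖ ≤ K ^ (1 / k : ℝ) * (‖A ^ k‖ ^ (1 / k : ℝ)) ^ d := by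
    intro k hk
    calc ‖μ‖ = (‖μ‖ ^ k) ^ (1 / k : ℝ) := by
          rw [one_div, Real.pow_rpow_inv_natCast (norm_nonneg _) hk]
      _ ≤ (K * ‖A ^ k‖ ^ d) ^ (1 / k : ℝ) := by gcongr; exact hpow k
      _ = K ^ (1 / k : ℝ) * (‖A ^ k‖ ^ (1 / k : ℝ)) ^ d := by
          rw [Real.mul_rpow hK.le (by positivity), ← Real.rpow_pow_comm (norm_nonneg _)]
  have hK1 : Tendsto (fun k : ℕ => K ^ (1 / k : ℝ)) atTop (𝓝 1) := by
    simpa using tendsto_const_nhds.rpow tendsto_one_div_atTop_nhds_zero_nat (Or.inl hK.ne')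
  have hgelfand : Tendsto (fun k : ℕ => ‖A ^ k‖ ^ (1 / k : ℝ)) atTop
      (𝓝 (spectralRadius ℂ A).toReal) :=
    ((ENNReal.tendsto_toReal (ne_top_of_le_ne_top ENNReal.ofReal_ne_top hA)).comp
      (spectrum.pow_norm_pow_one_div_tendsto_nhds_spectralRadius A)).congr
      fun k => ENNReal.toReal_ofReal (by positivity)
  calc ‖μ‖ ≤ (spectralRadius ℂ A).toReal ^ d := by
        refine ge_of_tendsto ?_ ((eventually_ne_atTop 0).mono hroot)
        simpa using hK1.mul (hgelfand.pow d)
    _ ≤ ρ ^ d := by gcongr; exact ENNReal.toReal_le_of_le_ofReal hρ hA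

namespace Module.End

variable {E : Type*} [NormedAddCommGroup E] [NormedSpace ℂ E] [FiniteDimensional ℂ E]

theorem spectralRadius_toContinuousLinearMap_le {A : Module.End ℂ E} {ρ : ℝ}
    (hA : ∀ ν, A.HasEigenvalue ν → ‖ν‖ ≤ ρ) :
    spectralRadius ℂ (toContinuousLinearMap E A) ≤ ENNReal.ofReal ρ := by
  refine iSup₂_le fun ν hν => ?_
  rw [ContinuousLinearMap.spectrum_eq] at hν
  rw [← ENNReal.ofReal_coe_nnreal, coe_nnnorm]
  exact ENNReal.ofReal_le_ofReal (hA ν (hasEigenvalue_iff_mem_spectrum.2 hν))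

theorem norm_le_pow_of_apply_eq_mul {A : Module.End ℂ E} {ρ : ℝ} (hρ : 0 ≤ ρ)
    (hA : ∀ ν, A.HasEigenvalue ν → ‖ν‖ ≤ ρ) {f : E → ℂ} {C : ℝ} {d : ℕ}
    (hf : ∀ z, ‖f z‖ ≤ C * ‖z‖ ^ d) {μ : ℂ} (hμ : ∀ z, f (A z) = μ * f z) {y : E}
    (hy : f y ≠ 0) : ‖μ‖ ≤ ρ ^ d :=
  ContinuousLinearMap.norm_le_pow_of_apply_eq_mul (A := toContinuousLinearMap E A) hρ
    (spectralRadius_toContinuousLinearMap_le hA) hf hμ hy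

end Module.End

namespace MvPolynomial

instance finite_homogeneousSubmodule {σ R : Type*} [CommSemiring R] [Finite σ] (d : ℕ) :
    Module.Finite R (homogeneousSubmodule σ R d) :=
  Module.Finite.iff_fg.2 (homogeneousSubmodule_fg σ R d)

theorem IsHomogeneous.eval_smul {σ R : Type*} [CommSemiring R] {p : MvPolynomial σ R} {d : ℕ}
    (hp : p.IsHomogeneous d) (c : R) (x : σ → R) : eval (c • x) p = c ^ d * eval x p := by
  rw [eval_eq, eval_eq, Finset.mul_sum]
  refine Finset.sum_congr rfl fun m hm => ?_
  simp only [Pi.smul_apply, smul_eq_mul, mul_pow, Finset.prod_mul_distrib,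
    Finset.prod_pow_eq_pow_sum]
  rw [← hp.degree_eq_sum_deg_support hm]
  ring

theorem IsHomogeneous.exists_norm_eval_le {σ 𝕜 : Type*} [Fintype σ] [NormedCommRing 𝕜]
    [NormOneClass 𝕜] {p : MvPolynomial σ 𝕜} {d : ℕ} (hp : p.IsHomogeneous d) :
    ∃ C : ℝ, ∀ z : σ → 𝕜, ‖eval z p‖ ≤ C * ‖z‖ ^ d := by
  refine ⟨∑ m ∈ p.support, ‖coeff m p‖, fun z => ?_⟩
  rw [eval_eq, Finset.sum_mul]
  refine (norm_sum_le _ _).trans (Finset.sum_le_sum fun m hm => ?_)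
  refine (norm_mul_le _ _).trans (mul_le_mul_of_nonneg_left ?_ (norm_nonneg _))
  calc ‖∏ i ∈ m.support, z i ^ m i‖ ≤ ∏ i ∈ m.support, ‖z i ^ m i‖ := Finset.norm_prod_le _ _
    _ ≤ ∏ i ∈ m.support, ‖z‖ ^ m i :=
        Finset.prod_le_prod (fun _ _ => norm_nonneg _) fun i _ =>
          (norm_pow_le _ _).trans (pow_le_pow_left₀ (norm_nonneg _) (norm_le_pi_norm z i) _)
    _ = ‖z‖ ^ d := by rw [Finset.prod_pow_eq_pow_sum, ← hp.degree_eq_sum_deg_support hm]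

theorem IsHomogeneous.norm_eq_pow_of_eval_apply_eq_mul {σ : Type*} [Fintype σ]
    {T : (σ → ℂ) ≃ₗ[ℂ] (σ → ℂ)} {r : ℝ} (hr : 0 < r)
    (hT : ∀ μ, Module.End.HasEigenvalue T.toLinearMap μ → ‖μ‖ = r)
    {p : MvPolynomial σ ℂ} {d : ℕ} (hp : p.IsHomogeneous d) (hne : p ≠ 0) {μ : ℂ}
    (hμ : ∀ y, eval (T y) p = μ * eval y p) : ‖μ‖ = r ^ d := by
  obtain ⟨C, hC⟩ := hp.exists_norm_eval_le
  obtain ⟨y, hy⟩ : ∃ y, eval y p ≠ 0 := by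
    by_contra! h
    exact hne (MvPolynomial.funext fun y => by simp [h y])
  have hμ0 : μ ≠ 0 := by
    rintro rfl
    exact hy (by simpa using hμ (T.symm y))
  have hμinv : ∀ z, eval (T.symm z) p = μ⁻¹ * eval z p := fun z => by
    rw [← T.apply_symm_apply z, hμ, T.apply_symm_apply, inv_mul_cancel_left₀ hμ0]
  have hupper : ‖μ‖ ≤ r ^ d :=
    Module.End.norm_le_pow_of_apply_eq_mul hr.le (fun ν hν => (hT ν hν).le) hC hμ hy
  have hlower : ‖μ⁻¹‖ ≤ r⁻¹ ^ d :=
    Module.End.norm_le_pow_of_apply_eq_mul (A := T.symm.toLinearMap) (inv_pos.2 hr).le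
      (fun ν hν => by
        rw [← inv_inv ν, norm_inv, hT _ (T.hasEigenvalue_inv_of_hasEigenvalue_symm hν)])
      hC hμinv hy
  rw [norm_inv, inv_pow, inv_le_inv₀ (norm_pos_iff.2 hμ0) (by positivity)] at hlower
  exact le_antisymm hupper hlower

section LinearSubst

variable {σ : Type*} [Fintype σ] [DecidableEq σ]

noncomputable def linearSubst {R : Type*} [CommSemiring R] (A : (σ → R) →ₗ[R] (σ → R)) :
    MvPolynomial σ R →ₐ[R] MvPolynomial σ R :=
  aeval (LinearMap.toMatrix' A).toMvPolynomial

theorem eval_linearSubst {R : Type*} [CommSemiring R] (A : (σ → R) →ₗ[R] (σ → R))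
    (p : MvPolynomial σ R) (x : σ → R) : eval x (linearSubst A p) = eval (A x) p := by
  change eval₂Hom _ x (bind₁ _ p) = _
  rw [eval₂Hom_bind₁]
  change eval (fun i => eval x _) p = _
  simp only [Matrix.toMvPolynomial_eval_eq_apply, LinearMap.toMatrix'_mulVec]

theorem IsHomogeneous.linearSubst {R : Type*} [CommSemiring R] {p : MvPolynomial σ R} {d : ℕ}
    (hp : p.IsHomogeneous d) (A : (σ → R) →ₗ[R] (σ → R)) :
    (MvPolynomial.linearSubst A p).IsHomogeneous d := by
  have h := hp.aeval _ (Matrix.toMvPolynomial_isHomogeneous (LinearMap.toMatrix' A))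
  rwa [one_mul] at h

noncomputable def linearSubstHomogeneous {R : Type*} [CommSemiring R]
    (A : (σ → R) →ₗ[R] (σ → R)) (d : ℕ) : Module.End R (homogeneousSubmodule σ R d) :=
  (linearSubst A).toLinearMap.restrict fun _ hq =>
    (mem_homogeneousSubmodule _ _).2 (((mem_homogeneousSubmodule _ _).1 hq).linearSubst A)

theorem norm_eq_pow_of_hasEigenvalue_linearSubstHomogeneous
    {T : (σ → ℂ) ≃ₗ[ℂ] (σ → ℂ)} {r : ℝ} (hr : 0 < r)
    (hT : ∀ μ, Module.End.HasEigenvalue T.toLinearMap μ → ‖μ‖ = r) {d : ℕ} {μ : ℂ}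
    (hμ : (linearSubstHomogeneous T.toLinearMap d).HasEigenvalue μ) : ‖μ‖ = r ^ d := by
  obtain ⟨q, hq⟩ := hμ.exists_hasEigenvector
  refine IsHomogeneous.norm_eq_pow_of_eval_apply_eq_mul hr hT q.2
    (fun h => hq.2 (Subtype.ext h)) fun y => ?_
  have := congrArg (fun q : homogeneousSubmodule σ ℂ d => eval y (q : MvPolynomial σ ℂ))
    hq.apply_eq_smul
  rwa [linearSubstHomogeneous, LinearMap.coe_restrict_apply, AlgHom.toLinearMap_apply,
    eval_linearSubst, Submodule.coe_smul, smul_eval] at this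

theorem homogeneousComponent_mem_of_le_comap_linearSubst
    {T : (σ → ℂ) ≃ₗ[ℂ] (σ → ℂ)} {r : ℝ} (hr0 : 0 < r) (hr1 : r ≠ 1)
    (hT : ∀ μ, Module.End.HasEigenvalue T.toLinearMap μ → ‖μ‖ = r)
    {P : Submodule ℂ (MvPolynomial σ ℂ)}
    (hP : P ≤ P.comap (linearSubst T.toLinearMap).toLinearMap) {p : MvPolynomial σ ℂ}
    (hp : p ∈ P) (d : ℕ) : homogeneousComponent d p ∈ P := by
  set χ : ℕ → Polynomial ℂ := fun e => minpoly ℂ (linearSubstHomogeneous T.toLinearMap e)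
  have hkill : ∀ e, Polynomial.aeval (linearSubst T.toLinearMap).toLinearMap (χ e)
      (homogeneousComponent e p) = 0 := fun e =>
    calc _ = (Polynomial.aeval (linearSubstHomogeneous T.toLinearMap e) (χ e)
              ⟨_, homogeneousComponent_mem e p⟩ : MvPolynomial σ ℂ) :=
          (Polynomial.aeval_restrict_apply _ _ _ _).symm
      _ = 0 := congrArg Subtype.val
          (LinearMap.congr_fun (minpoly.aeval ℂ (linearSubstHomogeneous T.toLinearMap e)) _)
  have hroot : ∀ e (μ : ℂ), Polynomial.aeval μ (χ e) = 0 → ‖μ‖ = r ^ e := fun e μ hμ =>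
    norm_eq_pow_of_hasEigenvalue_linearSubstHomogeneous hr0 hT
      (Module.End.hasEigenvalue_iff_isRoot.2 (by simpa [χ] using hμ))
  have hcop : (Finset.range (p.totalDegree + 1) : Set ℕ).Pairwise
      fun i j => IsCoprime (χ i) (χ j) := by
    intro i _ j _ hij
    rw [Polynomial.isCoprime_iff_aeval_ne_zero_of_isAlgClosed (k := ℂ) ℂ]
    intro μ
    by_contra! h
    exact hij (pow_right_injective₀ hr0 hr1 ((hroot i μ h.1).symm.trans (hroot j μ h.2)))
  by_cases hd : d ∈ Finset.range (p.totalDegree + 1)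
  · exact Submodule.mem_of_sum_mem_of_pairwise_isCoprime hP hcop (fun e _ => hkill e)
      (by rwa [sum_homogeneousComponent]) hd
  · rw [homogeneousComponent_eq_zero _ _ (by simpa [Nat.lt_succ_iff] using hd)]
    exact P.zero_mem

end LinearSubst

end MvPolynomial

/-- A closed algebraic subset of `ℂⁿ` stable under a linear automorphism all of whose
eigenvalues have the same absolute value `r ≠ 1` is a cone. -/
theorem statement12 (n : ℕ) (r : ℝ) (hr0 : 0 < r) (hr1 : r ≠ 1)
    (T : (Fin n → ℂ) ≃ₗ[ℂ] (Fin n → ℂ))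
    (hT : ∀ μ : ℂ, Module.End.HasEigenvalue T.toLinearMap μ → ‖μ‖ = r)
    (S : Set (MvPolynomial (Fin n) ℂ))
    (hZ : ∀ x : Fin n → ℂ, (∀ p ∈ S, MvPolynomial.eval x p = 0) →
      ∀ p ∈ S, MvPolynomial.eval (T x) p = 0) :
    ∀ x : Fin n → ℂ, (∀ p ∈ S, MvPolynomial.eval x p = 0) →
      ∀ c : ℂ, ∀ p ∈ S, MvPolynomial.eval (c • x) p = 0 := by
  intro x hx c p hp
  set P := (vanishingIdeal ℂ {x : Fin n → ℂ | ∀ p ∈ S, eval x p = 0}).restrictScalars ℂ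
  have hP : P ≤ P.comap (linearSubst T.toLinearMap).toLinearMap := fun q hq y hy => by
    simpa [eval_linearSubst] using hq (T y) (hZ y hy)
  have hpP : p ∈ P := fun y hy => by simpa using hy p hp
  rw [← sum_homogeneousComponent p, map_sum]
  refine Finset.sum_eq_zero fun d _ => ?_
  have hd : eval x (homogeneousComponent d p) = 0 := by
    simpa using homogeneousComponent_mem_of_le_comap_linearSubst hr0 hr1 hT hP hpP d x hx
  rw [(homogeneousComponent_isHomogeneous d p).eval_smul, hd, mul_zero]
end

section
/- Let V be a finite-dimensional ℂ-vector space, let f be a ℂ-linear automorphism of V, and let W be a subspace of V with f(W) = W. Let a and b be distinct positive real numbers such that every eigenvalue of the restriction of f to W has absolute value a and every eigenvalue of the endomorphism induced by f on the quotient V/W has absolute value b. Then there exists exactly one subspace U of V with f(U) = U, W ∩ U = 0 and W + U = V. -/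
open Polynomial Module

/-!
Let `p` and `q` be the minimal polynomials of `f` on `W` and on `V ⧸ W`. They have no common
root, so they are coprime, and `W = ker p(f)` while `q(f)` maps `V` into `W`. Then `ker q(f)` is
an `f`-stable complement of `W`. Conversely, for any `f`-stable complement `U` and `x ∈ U`, the
vector `q(f) x` lies in `U ∩ W = 0`, so `U ≤ ker q(f)`, and two complements of `W` one inside the
other coincide.
-/

theorem LinearMap.aeval_comp_eq_comp_aeval {R M N : Type*} [CommSemiring R] [AddCommMonoid M]
    [Module R M] [AddCommMonoid N] [Module R N] {φ : M →ₗ[R] N} {A : End R M} {B : End R N}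
    (h : B ∘ₗ φ = φ ∘ₗ A) (p : R[X]) : aeval B p ∘ₗ φ = φ ∘ₗ aeval A p := by
  induction p using Polynomial.induction_on' with
  | add p q hp hq => rw [map_add, map_add, LinearMap.add_comp, LinearMap.comp_add, hp, hq]
  | monomial n c =>
    rw [aeval_monomial, aeval_monomial, Algebra.algebraMap_eq_smul_one,
      Algebra.algebraMap_eq_smul_one, smul_mul_assoc, smul_mul_assoc, one_mul, one_mul,
      LinearMap.smul_comp, LinearMap.comp_smul, End.commute_pow_left_of_commute h]

theorem LinearMap.ker_aeval_le_comap {R M : Type*} [CommSemiring R] [AddCommMonoid M] [Module R M]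
    (g : End R M) (q : R[X]) : ker (aeval g q) ≤ (ker (aeval g q)).comap g := by
  intro x hx
  have hcomm := LinearMap.congr_fun (aeval_comp_eq_comp_aeval (φ := g) rfl q) x
  simpa [LinearMap.mem_ker.mp hx] using hcomm

theorem Module.End.isCoprime_minpoly_of_hasEigenvalue {K M N : Type*} [Field K] [IsAlgClosed K]
    [AddCommGroup M] [Module K M] [FiniteDimensional K M] [AddCommGroup N] [Module K N]
    [FiniteDimensional K N] {A : End K M} {B : End K N}
    (h : ∀ μ, A.HasEigenvalue μ → B.HasEigenvalue μ → False) :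
    IsCoprime (minpoly K A) (minpoly K B) := by
  rw [isCoprime_iff_aeval_ne_zero_of_isAlgClosed K K]
  intro μ
  by_contra! hμ
  exact h μ (hasEigenvalue_iff_isRoot.mpr hμ.1) (hasEigenvalue_iff_isRoot.mpr hμ.2)

namespace Submodule

variable {R M : Type*} [CommRing R] [AddCommGroup M] [Module R M]
  {g : End R M} {W : Submodule R M} {p q : R[X]}

theorem le_ker_aeval_of_aeval_restrict_eq_zero (hW : ∀ x ∈ W, g x ∈ W)
    (hp : aeval (g.restrict hW) p = 0) : W ≤ LinearMap.ker (aeval g p) := by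
  intro x hx
  have hcomm := LinearMap.congr_fun (LinearMap.aeval_comp_eq_comp_aeval
    (LinearMap.subtype_comp_restrict hW).symm p) ⟨x, hx⟩
  simpa [hp] using hcomm

theorem aeval_apply_mem_of_aeval_mapQ_eq_zero (hW : ∀ x ∈ W, g x ∈ W)
    (hq : aeval (W.mapQ W g hW) q = 0) (x : M) : aeval g q x ∈ W := by
  have hcomm :=
    LinearMap.congr_fun (LinearMap.aeval_comp_eq_comp_aeval (mapQ_mkQ W W g (h := hW)) q) x
  rw [← Quotient.mk_eq_zero]
  simpa [hq] using hcomm.symm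

theorem ker_aeval_eq_of_isCoprime (hW : ∀ x ∈ W, g x ∈ W)
    (hp : W ≤ LinearMap.ker (aeval g p))
    (hq : ∀ x, aeval g q x ∈ W) (hpq : IsCoprime p q) : LinearMap.ker (aeval g p) = W := by
  refine le_antisymm (fun x hx => ?_) hp
  obtain ⟨u, v, huv⟩ := hpq
  have hx_eq : x = aeval g v (aeval g q x) :=
    calc x = aeval g (u * p + v * q) x := by simp [huv]
      _ = aeval g v (aeval g q x) := by simp [End.mul_apply, LinearMap.mem_ker.mp hx]
  exact hx_eq ▸ aeval_apply_smul_mem_of_le_comap (hq x) v g hW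

theorem isCompl_ker_aeval (hW : ∀ x ∈ W, g x ∈ W) (hp : W ≤ LinearMap.ker (aeval g p))
    (hq : ∀ x, aeval g q x ∈ W) (hpq : IsCoprime p q) :
    IsCompl W (LinearMap.ker (aeval g q)) := by
  rw [← ker_aeval_eq_of_isCoprime hW hp hq hpq]
  refine ⟨disjoint_ker_aeval_of_isCoprime g hpq, codisjoint_iff.mpr ?_⟩
  rw [sup_ker_aeval_eq_ker_aeval_mul_of_coprime g hpq, eq_top_iff]
  intro x _
  rw [LinearMap.mem_ker, map_mul, End.mul_apply]
  exact hp (hq x)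

theorem eq_ker_aeval_of_isCompl (hq : ∀ x, aeval g q x ∈ W)
    (hK : IsCompl W (LinearMap.ker (aeval g q))) {U : Submodule R M} (hU : ∀ x ∈ U, g x ∈ U)
    (hWU : IsCompl W U) : U = LinearMap.ker (aeval g q) := by
  have hle : U ≤ LinearMap.ker (aeval g q) := fun x hx => by
    have : aeval g q x ∈ W ⊓ U := ⟨hq x, aeval_apply_smul_mem_of_le_comap hx q g hU⟩
    rwa [hWU.inf_eq_bot, mem_bot] at this
  exact eq_of_le_of_inf_le_of_le_sup hle (hK.symm.inf_eq_bot ▸ bot_le)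
    (hWU.symm.sup_eq_top ▸ le_top)

end Submodule

theorem statement13_general {V : Type*} [AddCommGroup V] [Module ℂ V] [FiniteDimensional ℂ V]
    (f : V ≃ₗ[ℂ] V) (W : Submodule ℂ V)
    (hfW : ∀ x ∈ W, f.toLinearMap x ∈ W)
    (a b : ℝ) (hab : a ≠ b)
    (hWa : ∀ μ : ℂ, Module.End.HasEigenvalue (f.toLinearMap.restrict hfW) μ →
      ‖μ‖ = a)
    (hVb : ∀ μ : ℂ, Module.End.HasEigenvalue (Submodule.mapQ W W f.toLinearMap hfW) μ →
      ‖μ‖ = b) :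
    ∃! U : Submodule ℂ V,
      Submodule.map f.toLinearMap U = U ∧ W ⊓ U = ⊥ ∧ W ⊔ U = ⊤ := by
  have hpq : IsCoprime (minpoly ℂ (f.toLinearMap.restrict hfW))
      (minpoly ℂ (W.mapQ W f.toLinearMap hfW)) :=
    End.isCoprime_minpoly_of_hasEigenvalue fun μ hμW hμQ =>
      hab ((hWa μ hμW).symm.trans (hVb μ hμQ))
  have hp := W.le_ker_aeval_of_aeval_restrict_eq_zero hfW (minpoly.aeval ℂ _)
  have hq := W.aeval_apply_mem_of_aeval_mapQ_eq_zero hfW (minpoly.aeval ℂ _)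
  have hK := W.isCompl_ker_aeval hfW hp hq hpq
  refine ⟨_, ⟨?_, hK.inf_eq_bot, hK.sup_eq_top⟩, fun U ⟨hUf, hWU, hWU'⟩ => ?_⟩
  · exact Submodule.eq_of_le_of_finrank_eq
      (Submodule.map_le_iff_le_comap.mpr (LinearMap.ker_aeval_le_comap _ _)) (f.finrank_map_eq _)
  · exact W.eq_ker_aeval_of_isCompl hq hK (fun x hx => hUf ▸ Submodule.mem_map_of_mem hx)
      ⟨disjoint_iff.mpr hWU, codisjoint_iff.mpr hWU'⟩

/-- Existence and uniqueness of an `f`-stable complement when the eigenvalues on the subspace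
and on the quotient have distinct absolute values. -/
theorem statement13 {V : Type*} [AddCommGroup V] [Module ℂ V] [FiniteDimensional ℂ V]
    (f : V ≃ₗ[ℂ] V) (W : Submodule ℂ V)
    (hfW : ∀ x ∈ W, f.toLinearMap x ∈ W)
    (hfW' : Submodule.map f.toLinearMap W = W)
    (a b : ℝ) (ha : 0 < a) (hb : 0 < b) (hab : a ≠ b)
    (hWa : ∀ μ : ℂ, Module.End.HasEigenvalue (f.toLinearMap.restrict hfW) μ →
      ‖μ‖ = a)
    (hVb : ∀ μ : ℂ, Module.End.HasEigenvalue (Submodule.mapQ W W f.toLinearMap hfW) μ →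
      ‖μ‖ = b) :
    ∃! U : Submodule ℂ V,
      Submodule.map f.toLinearMap U = U ∧ W ⊓ U = ⊥ ∧ W ⊔ U = ⊤ :=
  statement13_general f W hfW a b hab hWa hVb
end

section
/- Let k be a field and let V be a nonzero k-vector space of finite dimension m, with exterior algebra Λ = ⋀V. Let L = ⊕_{n∈ℤ} L_n be a ℤ-graded k-vector space, nonzero and finite-dimensional over k, equipped with a left Λ-module structure such that v·L_n ⊆ L_{n+1} for every v ∈ V and every n ∈ ℤ. If L is free as a Λ-module, then max{n ∈ ℤ : L_n ≠ 0} − min{n ∈ ℤ : L_n ≠ 0} ≥ m. -/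
/-!
If `e₁, …, e_m` is a basis of `V`, the top form `ω = e₁ ∧ ⋯ ∧ e_m` is nonzero, so it acts
nontrivially on the nonzero free `⋀V`-module `L`, hence on some homogeneous `z ∈ L_n`.
Then `z ≠ 0` lies in degree `n` and `ω • z ≠ 0` lies in degree `n + m`.
-/

namespace ExteriorAlgebra

variable {R M : Type*} [CommRing R] [AddCommGroup M] [Module R M]

theorem ιMulti_basis_ne_zero [Nontrivial R] {n : ℕ} (b : Module.Basis (Fin n) R M) :
    ιMulti R n b ≠ 0 := by
  classical
  let f : ∀ i : ℕ, M [⋀^Fin i]→ₗ[R] R := fun i => if h : i = n then h ▸ b.det else 0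
  have hf : f n = b.det := by simp [f]
  intro h
  exact b.det_ne_zero (by simpa [hf] using congrArg (liftAlternating f) h)

theorem ιMulti_smul_mem {L G S : Type*} [AddCommGroup L] [Module (ExteriorAlgebra R M) L]
    [AddMonoid G] [SetLike S L] (𝒜 : G → S) (d : G)
    (hdeg : ∀ (u : M) (i : G), ∀ x ∈ 𝒜 i, ι R u • x ∈ 𝒜 (i + d)) :
    ∀ {n : ℕ} (v : Fin n → M) {i : G} {x : L}, x ∈ 𝒜 i → ιMulti R n v • x ∈ 𝒜 (i + n • d)
  | 0, _, _, _, hx => by simpa using hx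
  | n + 1, v, i, x, hx => by
    rw [ιMulti_succ_apply, mul_smul, succ_nsmul, ← add_assoc]
    exact hdeg _ _ _ (ιMulti_smul_mem 𝒜 d hdeg _ hx)

end ExteriorAlgebra

theorem Submodule.exists_mem_smul_ne_zero_of_iSup_eq_top {A k L ι : Type*} [Monoid A]
    [Semiring k] [AddCommMonoid L] [Module k L] [DistribMulAction A L] {𝒜 : ι → Submodule k L}
    (h𝒜 : ⨆ i, 𝒜 i = ⊤) {a : A} {x : L} (hx : a • x ≠ 0) : ∃ i, ∃ z ∈ 𝒜 i, a • z ≠ 0 := by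
  by_contra! hzero
  refine hx (Submodule.iSup_induction 𝒜 (motive := fun y => a • y = 0) (h𝒜 ▸ trivial) hzero
    (smul_zero a) fun y z hy hz => ?_)
  rw [smul_add, hy, hz, add_zero]

theorem FaithfulSMul.exists_smul_ne_zero {R M : Type*} [Zero R] [Zero M] [SMulWithZero R M]
    [FaithfulSMul R M] {a : R} (ha : a ≠ 0) : ∃ x : M, a • x ≠ 0 := by
  by_contra! h
  exact ha (eq_of_smul_eq_smul fun x => by rw [h x, zero_smul])

theorem statement14_general {k V : Type*} [Field k] [AddCommGroup V] [Module k V]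
    [FiniteDimensional k V] (m : ℕ) (hm : Module.finrank k V = m)
    {L : Type*} [AddCommGroup L] [Module (ExteriorAlgebra k V) L]
    [Module k L]
    [Nontrivial L]
    (𝒜 : ℤ → Submodule k L) (hdecomp : DirectSum.IsInternal 𝒜)
    (hdeg : ∀ (u : V) (n : ℤ), ∀ x ∈ 𝒜 n, (ExteriorAlgebra.ι k u) • x ∈ 𝒜 (n + 1))
    (hfree : Module.Free (ExteriorAlgebra k V) L) :
    ∃ n₁ n₂ : ℤ, 𝒜 n₁ ≠ ⊥ ∧ 𝒜 n₂ ≠ ⊥ ∧ (m : ℤ) ≤ n₂ - n₁ := by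
  let b : Module.Basis (Fin m) k V := (Module.finBasis k V).reindex (finCongr hm)
  obtain ⟨x, hx⟩ : ∃ x : L, ExteriorAlgebra.ιMulti k m b • x ≠ 0 :=
    FaithfulSMul.exists_smul_ne_zero (ExteriorAlgebra.ιMulti_basis_ne_zero b)
  obtain ⟨n, z, hz, hωz⟩ :=
    Submodule.exists_mem_smul_ne_zero_of_iSup_eq_top hdecomp.submodule_iSup_eq_top hx
  have hz_ne : z ≠ 0 := by
    rintro rfl
    exact hωz (smul_zero _)
  have hωz_mem : ExteriorAlgebra.ιMulti k m b • z ∈ 𝒜 (n + m) := by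
    simpa using ExteriorAlgebra.ιMulti_smul_mem 𝒜 1 hdeg b hz
  exact ⟨n, n + m, (Submodule.ne_bot_iff _).mpr ⟨z, hz, hz_ne⟩,
    (Submodule.ne_bot_iff _).mpr ⟨_, hωz_mem, hωz⟩, by simp⟩

/-- A nonzero graded free module over the exterior algebra of an `m`-dimensional vector space,
whose grading is raised by one by vectors, has amplitude at least `m`. -/
theorem statement14 {k V : Type*} [Field k] [AddCommGroup V] [Module k V]
    [FiniteDimensional k V] [Nontrivial V] (m : ℕ) (hm : Module.finrank k V = m)
    {L : Type*} [AddCommGroup L] [Module (ExteriorAlgebra k V) L]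
    [Module k L] [IsScalarTower k (ExteriorAlgebra k V) L]
    [Nontrivial L] [FiniteDimensional k L]
    (𝒜 : ℤ → Submodule k L) (hdecomp : DirectSum.IsInternal 𝒜)
    (hdeg : ∀ (u : V) (n : ℤ), ∀ x ∈ 𝒜 n, (ExteriorAlgebra.ι k u) • x ∈ 𝒜 (n + 1))
    (hfree : Module.Free (ExteriorAlgebra k V) L) :
    ∃ n₁ n₂ : ℤ, 𝒜 n₁ ≠ ⊥ ∧ 𝒜 n₂ ≠ ⊥ ∧ (m : ℤ) ≤ n₂ - n₁ :=
  statement14_general m hm 𝒜 hdecomp hdeg hfree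
end
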